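/- In the two-player game with payoff matrix (T,L)=(0,0), (T,M)=(0,1), (T,R)=(0.85,0.75), (M,L)=(1,0), (M,M)=(0,0), (M,R)=(0,0), (B,L)=(0.75,0.85), (B,M)=(0,0), (B,R)=(0,0), the joint distribution placing probability 0.5 on (T,R) and 0.5 on (B,L) is a coarse correlated equilibrium, and each player's expected payoff under it equals 0.8. -/

import Mathlib

open Finset

noncomputable def UA : Fin 3 → Fin 3 → ℝ :=
  ![![0, 0, 0.85], ![1, 0, 0], ![0.75, 0, 0]]

noncomputable def UB : Fin 3 → Fin 3 → ℝ :=
  ![![0, 1, 0.75], ![0, 0, 0], ![0.85, 0, 0]]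

/-- The joint distribution placing probability 0.5 on (T,R) and 0.5 on (B,L). -/
noncomputable def qE : Fin 3 → Fin 3 → ℝ := fun a b =>
  if (a, b) = (0, 2) ∨ (a, b) = (2, 0) then 0.5 else 0

theorem sum_sum_mul_qE (f : Fin 3 → Fin 3 → ℝ) :
    ∑ a : Fin 3, ∑ b : Fin 3, f a b * qE a b = (f 0 2 + f 2 0) / 2 := by
  simp only [qE, Fin.sum_univ_three, Prod.mk.injEq, Fin.reduceEq, mul_ite, mul_zero, and_true,
    and_false, or_false, false_or, or_self, ↓reduceIte, add_zero, zero_add]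
  ring

/-- `qE` is a coarse correlated equilibrium of the given game, and each player's
expected payoff under it equals 0.8. -/
theorem example_game_efficient_CCE :
    (∀ a' : Fin 3, ∑ a : Fin 3, ∑ b : Fin 3, UA a' b * qE a b ≤
      ∑ a : Fin 3, ∑ b : Fin 3, UA a b * qE a b) ∧
    (∀ b' : Fin 3, ∑ a : Fin 3, ∑ b : Fin 3, UB a b' * qE a b ≤
      ∑ a : Fin 3, ∑ b : Fin 3, UB a b * qE a b) ∧
    (∑ a : Fin 3, ∑ b : Fin 3, UA a b * qE a b = 0.8) ∧
    (∑ a : Fin 3, ∑ b : Fin 3, UB a b * qE a b = 0.8) := by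
  have payoff_A : ∑ a : Fin 3, ∑ b : Fin 3, UA a b * qE a b = 0.8 := by
    rw [sum_sum_mul_qE]; norm_num [UA, Matrix.cons_val_two, Matrix.tail_cons]
  have payoff_B : ∑ a : Fin 3, ∑ b : Fin 3, UB a b * qE a b = 0.8 := by
    rw [sum_sum_mul_qE]; norm_num [UB, Matrix.cons_val_two, Matrix.tail_cons]
  -- A fixed deviation earns the average of its payoffs at (T,R) and (B,L), at most 1/2 < 0.8.
  refine ⟨fun a' => ?_, fun b' => ?_, payoff_A, payoff_B⟩
  · rw [payoff_A, sum_sum_mul_qE fun _ b => UA a' b]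
    fin_cases a' <;> norm_num [UA, Matrix.cons_val_two, Matrix.tail_cons]
  · rw [payoff_B, sum_sum_mul_qE fun a _ => UB a b']
    fin_cases b' <;> norm_num [UB, Matrix.cons_val_two, Matrix.tail_cons]
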